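/- Let A, Â, B, B̂ be real matrices with ‖Â − A‖ ≤ ε̄ and ‖B̂ − B‖ ≤ ε̄, suppose ‖Aᵏ‖ ≤ κγᵏ for all k ≥ 0 with κ ≥ 1 and 0 < γ < 1, and suppose ε̄ ≤ (1−γ)/(4κ). Then for all k ≥ 0, ‖Âᵏ − Aᵏ‖ ≤ k·κ²·((3+γ)/4)^{k−1}·ε̄ and ‖ÂᵏB̂ − AᵏB‖ ≤ k·κ²·((3+γ)/4)^{k−1}·ε̄·(‖B‖ + ε̄) + κγᵏε̄. -/

import Mathlib

/-!
Telescoping `aᵏ - bᵏ = ∑ aⁱ (a - b) bᵏ⁻¹⁻ⁱ` with `‖bʲ‖ ≤ κγʲ` and `‖a - b‖ ≤ ε` gives, by strong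
induction, `‖aᵏ‖ ≤ κβᵏ` for `β = γ + κε`, and then `‖aᵏ - bᵏ‖ ≤ κ(βᵏ - γᵏ)`. The smallness of `ε`
gives `β ≤ ρ := (3 + γ)/4`, and the mean value bound `βᵏ - γᵏ ≤ k(β - γ)ρᵏ⁻¹` yields the first
estimate. The second follows from `ÂB̂ - AB = (Â - A)(B + (B̂ - B)) + A(B̂ - B)`.
-/

open Finset

theorem pow_sub_pow_eq_sum_pow_mul_sub_mul_pow {R : Type*} [Ring R] (a b : R) (k : ℕ) :
    a ^ k - b ^ k = ∑ i ∈ range k, a ^ i * (a - b) * b ^ (k - 1 - i) := by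
  have htele := sum_range_sub (fun i => a ^ i * b ^ (k - i)) k
  simp only [Nat.sub_self, pow_zero, mul_one, Nat.sub_zero, one_mul] at htele
  rw [← htele]
  refine sum_congr rfl fun i hi => ?_
  have hik := mem_range.mp hi
  rw [show k - i = k - 1 - i + 1 by omega, show k - (i + 1) = k - 1 - i by omega, pow_succ,
    pow_succ']
  noncomm_ring

theorem pow_sub_pow_le_mul_pow_of_le {α : Type*} [CommRing α] [LinearOrder α]
    [IsStrictOrderedRing α] {x y z : α} (hy : 0 ≤ y) (hyx : y ≤ x) (hxz : x ≤ z) (k : ℕ) :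
    x ^ k - y ^ k ≤ k * (x - y) * z ^ (k - 1) :=
  calc x ^ k - y ^ k ≤ |x ^ k - y ^ k| := le_abs_self _
    _ ≤ |x - y| * k * max |x| |y| ^ (k - 1) := abs_pow_sub_pow_le x y k
    _ = (x - y) * k * x ^ (k - 1) := by
      rw [abs_of_nonneg (sub_nonneg.mpr hyx), abs_of_nonneg (hy.trans hyx), abs_of_nonneg hy,
        max_eq_left hyx]
    _ ≤ k * (x - y) * z ^ (k - 1) := by
      rw [mul_comm (x - y)]
      gcongr
      exact hy.trans hyx

section NormedRing

variable {R : Type*} [NormedRing R]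

theorem norm_pow_sub_pow_le_sum (a b : R) (k : ℕ) :
    ‖a ^ k - b ^ k‖ ≤ ∑ i ∈ range k, ‖a ^ i‖ * ‖a - b‖ * ‖b ^ (k - 1 - i)‖ := by
  rw [pow_sub_pow_eq_sum_pow_mul_sub_mul_pow]
  refine (norm_sum_le _ _).trans (sum_le_sum fun i _ => ?_)
  exact (norm_mul_le _ _).trans (mul_le_mul_of_nonneg_right (norm_mul_le _ _) (norm_nonneg _))

variable {a b : R} {κ γ ε : ℝ}

theorem norm_pow_sub_pow_le_of_forall_lt (hb : ∀ j, ‖b ^ j‖ ≤ κ * γ ^ j) (hab : ‖a - b‖ ≤ ε)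
    {k : ℕ} (ha : ∀ i < k, ‖a ^ i‖ ≤ κ * (γ + κ * ε) ^ i) :
    ‖a ^ k - b ^ k‖ ≤ κ * ((γ + κ * ε) ^ k - γ ^ k) :=
  calc ‖a ^ k - b ^ k‖ ≤ ∑ i ∈ range k, ‖a ^ i‖ * ‖a - b‖ * ‖b ^ (k - 1 - i)‖ :=
        norm_pow_sub_pow_le_sum a b k
    _ ≤ ∑ i ∈ range k, κ * (γ + κ * ε) ^ i * ε * (κ * γ ^ (k - 1 - i)) := by
        refine sum_le_sum fun i hi => ?_
        have hai := ha i (mem_range.mp hi)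
        refine mul_le_mul (mul_le_mul hai hab (norm_nonneg _) ((norm_nonneg _).trans hai))
          (hb _) (norm_nonneg _) ?_
        exact mul_nonneg ((norm_nonneg _).trans hai) ((norm_nonneg _).trans hab)
    _ = κ * ((∑ i ∈ range k, (γ + κ * ε) ^ i * γ ^ (k - 1 - i)) * (γ + κ * ε - γ)) := by
        rw [sum_mul, mul_sum]
        refine sum_congr rfl fun i _ => ?_
        ring
    _ = κ * ((γ + κ * ε) ^ k - γ ^ k) := by rw [geom_sum₂_mul]

theorem norm_pow_le_of_norm_sub_le (hb : ∀ j, ‖b ^ j‖ ≤ κ * γ ^ j) (hab : ‖a - b‖ ≤ ε)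
    (k : ℕ) : ‖a ^ k‖ ≤ κ * (γ + κ * ε) ^ k := by
  induction k using Nat.strong_induction_on with
  | _ k ih =>
    calc ‖a ^ k‖ = ‖b ^ k + (a ^ k - b ^ k)‖ := by rw [add_sub_cancel]
      _ ≤ ‖b ^ k‖ + ‖a ^ k - b ^ k‖ := norm_add_le _ _
      _ ≤ κ * γ ^ k + κ * ((γ + κ * ε) ^ k - γ ^ k) :=
          add_le_add (hb k) (norm_pow_sub_pow_le_of_forall_lt hb hab ih)
      _ = κ * (γ + κ * ε) ^ k := by ring

theorem norm_pow_sub_pow_le_of_norm_sub_le (hb : ∀ j, ‖b ^ j‖ ≤ κ * γ ^ j)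
    (hab : ‖a - b‖ ≤ ε) (k : ℕ) : ‖a ^ k - b ^ k‖ ≤ κ * ((γ + κ * ε) ^ k - γ ^ k) :=
  norm_pow_sub_pow_le_of_forall_lt hb hab fun i _ => norm_pow_le_of_norm_sub_le hb hab i

end NormedRing

theorem ContinuousLinearMap.norm_comp_sub_comp_le {𝕜 E F G : Type*} [NontriviallyNormedField 𝕜]
    [SeminormedAddCommGroup E] [SeminormedAddCommGroup F] [SeminormedAddCommGroup G]
    [NormedSpace 𝕜 E] [NormedSpace 𝕜 F] [NormedSpace 𝕜 G] (f f' : F →L[𝕜] G) (g g' : E →L[𝕜] F) :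
    ‖f'.comp g' - f.comp g‖ ≤ ‖f' - f‖ * (‖g‖ + ‖g' - g‖) + ‖f‖ * ‖g' - g‖ := by
  have hsplit : f'.comp g' - f.comp g = (f' - f).comp (g + (g' - g)) + f.comp (g' - g) := by
    simp only [add_sub_cancel, comp_sub, sub_comp]
    abel
  rw [hsplit]
  refine (norm_add_le _ _).trans (add_le_add ?_ (opNorm_comp_le _ _))
  exact (opNorm_comp_le _ _).trans
    (mul_le_mul_of_nonneg_left (norm_add_le _ _) (norm_nonneg _))

theorem stmt2_general {n m : ℕ}
    (A Ahat : EuclideanSpace ℝ (Fin n) →L[ℝ] EuclideanSpace ℝ (Fin n))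
    (B Bhat : EuclideanSpace ℝ (Fin m) →L[ℝ] EuclideanSpace ℝ (Fin n))
    (κ γ ε : ℝ) (hκ : 1 ≤ κ) (hγ0 : 0 < γ) (hγ1 : γ < 1)
    (hεsmall : ε ≤ (1 - γ) / (4 * κ))
    (hA : ‖Ahat - A‖ ≤ ε) (hB : ‖Bhat - B‖ ≤ ε)
    (hpow : ∀ k : ℕ, ‖A ^ k‖ ≤ κ * γ ^ k) :
    ∀ k : ℕ,
      ‖Ahat ^ k - A ^ k‖ ≤ (k : ℝ) * κ ^ 2 * ((3 + γ) / 4) ^ (k - 1) * ε ∧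
      ‖(Ahat ^ k).comp Bhat - (A ^ k).comp B‖ ≤
        (k : ℝ) * κ ^ 2 * ((3 + γ) / 4) ^ (k - 1) * ε * (‖B‖ + ε) + κ * γ ^ k * ε := by
  intro k
  have hκ0 : 0 < κ := by linarith
  have hκε : κ * ε ≤ (1 - γ) / 4 :=
    calc κ * ε ≤ κ * ((1 - γ) / (4 * κ)) := by gcongr
      _ = (1 - γ) / 4 := by field_simp
  have hκε0 : 0 ≤ κ * ε := mul_nonneg hκ0.le ((norm_nonneg _).trans hA)
  have hD : ‖Ahat ^ k - A ^ k‖ ≤ (k : ℝ) * κ ^ 2 * ((3 + γ) / 4) ^ (k - 1) * ε :=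
    calc ‖Ahat ^ k - A ^ k‖ ≤ κ * ((γ + κ * ε) ^ k - γ ^ k) :=
          norm_pow_sub_pow_le_of_norm_sub_le hpow hA k
      _ ≤ κ * (k * (γ + κ * ε - γ) * ((3 + γ) / 4) ^ (k - 1)) := by
          gcongr
          exact pow_sub_pow_le_mul_pow_of_le hγ0.le (by linarith) (by linarith) k
      _ = (k : ℝ) * κ ^ 2 * ((3 + γ) / 4) ^ (k - 1) * ε := by ring
  refine ⟨hD, ?_⟩
  calc ‖(Ahat ^ k).comp Bhat - (A ^ k).comp B‖
      ≤ ‖Ahat ^ k - A ^ k‖ * (‖B‖ + ‖Bhat - B‖) + ‖A ^ k‖ * ‖Bhat - B‖ :=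
        ContinuousLinearMap.norm_comp_sub_comp_le _ _ _ _
    _ ≤ (k : ℝ) * κ ^ 2 * ((3 + γ) / 4) ^ (k - 1) * ε * (‖B‖ + ε) + κ * γ ^ k * ε := by
        refine add_le_add (mul_le_mul hD (by linarith) (by positivity) ((norm_nonneg _).trans hD))
          (mul_le_mul (hpow k) hB (norm_nonneg _) ((norm_nonneg _).trans (hpow k)))

/-- Perturbation bounds for powers `Âᵏ` vs `Aᵏ` and products `ÂᵏB̂` vs `AᵏB` under
estimation error `ε̄` and a geometric power bound on `A`. -/
theorem stmt2 {n m : ℕ}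
    (A Ahat : EuclideanSpace ℝ (Fin n) →L[ℝ] EuclideanSpace ℝ (Fin n))
    (B Bhat : EuclideanSpace ℝ (Fin m) →L[ℝ] EuclideanSpace ℝ (Fin n))
    (κ γ ε : ℝ) (hκ : 1 ≤ κ) (hγ0 : 0 < γ) (hγ1 : γ < 1) (hε : 0 < ε)
    (hεsmall : ε ≤ (1 - γ) / (4 * κ))
    (hA : ‖Ahat - A‖ ≤ ε) (hB : ‖Bhat - B‖ ≤ ε)
    (hpow : ∀ k : ℕ, ‖A ^ k‖ ≤ κ * γ ^ k) :
    ∀ k : ℕ,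
      ‖Ahat ^ k - A ^ k‖ ≤ (k : ℝ) * κ ^ 2 * ((3 + γ) / 4) ^ (k - 1) * ε ∧
      ‖(Ahat ^ k).comp Bhat - (A ^ k).comp B‖ ≤
        (k : ℝ) * κ ^ 2 * ((3 + γ) / 4) ^ (k - 1) * ε * (‖B‖ + ε) + κ * γ ^ k * ε :=
  stmt2_general A Ahat B Bhat κ γ ε hκ hγ0 hγ1 hεsmall hA hB hpow
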